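/- arXiv:1710.03644 — 3 statements merged into one kernel-verified Lean document; each statement's English description precedes it below -/
import Mathlib

section
/- Let β > 0 and κ > 0, and let φ : [0,1] → ℝ be a C² function satisfying φ''(x) = β⁻² sin(φ(x)) cos(φ(x)) for all x ∈ (0,1), together with φ(0) = 0 and φ'(1) = 2κ. Then for every x ∈ [0,1] one has φ'(x)² = β⁻² sin²(φ(x)) + φ'(0)², moreover φ'(0) ≠ 0 and φ'(x) > 0 for all x ∈ [0,1], so that φ is strictly increasing on [0,1]. -/
open Real Set

/-! The energy `φ'² - β⁻² sin² φ` is conserved along the equation and equals `φ'(0)²`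
because `φ 0 = 0`. If `φ'(0) = 0`, then `|φ'| ≤ |β|⁻¹ |sin φ| ≤ |β|⁻¹ |φ|` and Grönwall's
inequality forces `φ ≡ 0`, contradicting `φ'(1) = 2κ > 0`. Hence `φ'² ≥ φ'(0)² > 0`, so `φ'`
never vanishes and, being positive at `1`, is positive throughout. -/

theorem eq_of_hasDerivAt_zero_of_continuousOn {f : ℝ → ℝ} {a b : ℝ}
    (hf : ContinuousOn f (Icc a b)) (hf' : ∀ x ∈ Ioo a b, HasDerivAt f 0 x) :
    ∀ x ∈ Icc a b, f x = f a := by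
  intro x hx
  rcases hx.1.eq_or_lt with rfl | hax
  · rfl
  obtain ⟨c, -, hc⟩ := exists_hasDerivAt_eq_slope f (fun _ => 0) hax
    (hf.mono (Icc_subset_Icc_right hx.2)) fun y hy => hf' y ⟨hy.1, hy.2.trans_le hx.2⟩
  rw [eq_comm, div_eq_zero_iff, sub_eq_zero, sub_eq_zero] at hc
  exact hc.resolve_right hax.ne'

theorem eq_zero_of_norm_deriv_right_le_mul_norm {E : Type*} [NormedAddCommGroup E]
    [NormedSpace ℝ E] {f f' : ℝ → E} {K a b : ℝ} (hf : ContinuousOn f (Icc a b))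
    (hf' : ∀ x ∈ Ico a b, HasDerivWithinAt f (f' x) (Ici x) x) (ha : f a = 0)
    (bound : ∀ x ∈ Ico a b, ‖f' x‖ ≤ K * ‖f x‖) : ∀ x ∈ Icc a b, f x = 0 := by
  intro x hx
  have := norm_le_gronwallBound_of_norm_deriv_right_le (δ := 0) (ε := 0) hf hf'
    (by rw [ha, norm_zero]) (fun y hy => (bound y hy).trans_eq (add_zero _).symm) x hx
  rwa [gronwallBound_ε0_δ0, norm_le_zero_iff] at this

theorem ContinuousOn.pos_of_ne_zero_of_pos_right {f : ℝ → ℝ} {a b : ℝ}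
    (hf : ContinuousOn f (Icc a b)) (hne : ∀ x ∈ Icc a b, f x ≠ 0) (hb : 0 < f b) :
    ∀ x ∈ Icc a b, 0 < f x := by
  intro x hx
  by_contra! hx0
  obtain ⟨c, hc, hc0⟩ := intermediate_value_Icc hx.2 (hf.mono (Icc_subset_Icc_left hx.1))
    ⟨hx0, hb.le⟩
  exact hne c ⟨hx.1.trans hc.1, hc.2⟩ hc0

theorem sq_deriv_sub_mul_sin_sq_eq {c a b : ℝ} {φ φ' φ'' : ℝ → ℝ}
    (hd1 : ∀ x ∈ Icc a b, HasDerivAt φ (φ' x) x) (hd2 : ∀ x ∈ Icc a b, HasDerivAt φ' (φ'' x) x)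
    (hode : ∀ x ∈ Ioo a b, φ'' x = c * sin (φ x) * cos (φ x)) :
    ∀ x ∈ Icc a b, φ' x ^ 2 - c * sin (φ x) ^ 2 = φ' a ^ 2 - c * sin (φ a) ^ 2 := by
  have hE (x) (hx : x ∈ Icc a b) :=
    ((hd2 x hx).pow 2).sub (((hd1 x hx).sin.pow 2).const_mul c)
  refine eq_of_hasDerivAt_zero_of_continuousOn
    (fun x hx => (hE x hx).continuousAt.continuousWithinAt)
    fun x hx => (hE x (Ioo_subset_Icc_self hx)).congr_deriv ?_
  rw [hode x hx]
  push_cast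
  ring

theorem eq_zero_of_sq_deriv_le_sq_mul_sin_sq {k a b : ℝ} {φ φ' : ℝ → ℝ}
    (hd : ∀ x ∈ Icc a b, HasDerivAt φ (φ' x) x) (ha : φ a = 0)
    (hle : ∀ x ∈ Icc a b, φ' x ^ 2 ≤ k ^ 2 * sin (φ x) ^ 2) : ∀ x ∈ Icc a b, φ x = 0 := by
  refine eq_zero_of_norm_deriv_right_le_mul_norm (K := |k|)
    (fun x hx => (hd x hx).continuousAt.continuousWithinAt)
    (fun x hx => (hd x (Ico_subset_Icc_self hx)).hasDerivWithinAt) ha fun x hx => ?_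
  have : φ' x ^ 2 ≤ (k * φ x) ^ 2 := by
    refine (hle x (Ico_subset_Icc_self hx)).trans ?_
    rw [mul_pow]
    exact mul_le_mul_of_nonneg_left sin_sq_le_sq (sq_nonneg k)
  simpa [abs_mul] using sq_le_sq.mp this

theorem stmt0_general (β κ : ℝ) (hκ : 0 < κ)
    (φ φ' φ'' : ℝ → ℝ)
    (hd1 : ∀ x ∈ Icc (0:ℝ) 1, HasDerivAt φ (φ' x) x)
    (hd2 : ∀ x ∈ Icc (0:ℝ) 1, HasDerivAt φ' (φ'' x) x)
    (hode : ∀ x ∈ Ioo (0:ℝ) 1,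
      φ'' x = (1 / β ^ 2) * Real.sin (φ x) * Real.cos (φ x))
    (h0 : φ 0 = 0) (h1 : φ' 1 = 2 * κ) :
    (∀ x ∈ Icc (0:ℝ) 1,
        (φ' x) ^ 2 = (1 / β ^ 2) * Real.sin (φ x) ^ 2 + (φ' 0) ^ 2) ∧
      φ' 0 ≠ 0 ∧ (∀ x ∈ Icc (0:ℝ) 1, 0 < φ' x) ∧
      StrictMonoOn φ (Icc (0:ℝ) 1) := by
  have hfirst : ∀ x ∈ Icc (0:ℝ) 1, φ' x ^ 2 = 1 / β ^ 2 * sin (φ x) ^ 2 + φ' 0 ^ 2 := by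
    intro x hx
    have := sq_deriv_sub_mul_sin_sq_eq hd1 hd2 hode x hx
    rw [h0, sin_zero] at this
    linarith
  have hne0 : φ' 0 ≠ 0 := by
    intro hz
    have hφ := eq_zero_of_sq_deriv_le_sq_mul_sin_sq (k := 1 / β) hd1 h0 fun x hx => by
      rw [hfirst x hx, hz, div_pow, one_pow, zero_pow two_ne_zero, add_zero]
    have := hfirst 1 (right_mem_Icc.mpr zero_le_one)
    rw [hφ 1 (right_mem_Icc.mpr zero_le_one), hz, h1, sin_zero] at this
    nlinarith
  have hpos : ∀ x ∈ Icc (0:ℝ) 1, 0 < φ' x := by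
    refine ContinuousOn.pos_of_ne_zero_of_pos_right
      (fun x hx => (hd2 x hx).continuousAt.continuousWithinAt) (fun x hx hx0 => ?_) (by linarith)
    have := hfirst x hx
    rw [hx0] at this
    have : 0 < 1 / β ^ 2 * sin (φ x) ^ 2 + φ' 0 ^ 2 := by positivity
    linarith
  exact ⟨hfirst, hne0, hpos, strictMonoOn_of_hasDerivWithinAt_pos (convex_Icc 0 1)
    (fun x hx => (hd1 x hx).continuousAt.continuousWithinAt)
    (fun x hx => (hd1 x (interior_subset hx)).hasDerivWithinAt)
    fun x hx => hpos x (interior_subset hx)⟩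

/-- Let `β > 0`, `κ > 0` and let `φ : [0,1] → ℝ` be a `C²` function
(with first derivative `φ'` and second derivative `φ''`) satisfying
`φ'' = β⁻² sin φ cos φ` on `(0,1)`, `φ 0 = 0` and `φ' 1 = 2κ`.  Then the first integral
`φ'(x)² = β⁻² sin²(φ x) + φ'(0)²` holds on `[0,1]`, `φ'(0) ≠ 0`, `φ' > 0` on `[0,1]`,
and `φ` is strictly increasing on `[0,1]`. -/
theorem stmt0 (β κ : ℝ) (hβ : 0 < β) (hκ : 0 < κ)
    (φ φ' φ'' : ℝ → ℝ)
    (hd1 : ∀ x ∈ Icc (0:ℝ) 1, HasDerivAt φ (φ' x) x)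
    (hd2 : ∀ x ∈ Icc (0:ℝ) 1, HasDerivAt φ' (φ'' x) x)
    (hC2 : ContinuousOn φ'' (Icc (0:ℝ) 1))
    (hode : ∀ x ∈ Ioo (0:ℝ) 1,
      φ'' x = (1 / β ^ 2) * Real.sin (φ x) * Real.cos (φ x))
    (h0 : φ 0 = 0) (h1 : φ' 1 = 2 * κ) :
    (∀ x ∈ Icc (0:ℝ) 1,
        (φ' x) ^ 2 = (1 / β ^ 2) * Real.sin (φ x) ^ 2 + (φ' 0) ^ 2) ∧
      φ' 0 ≠ 0 ∧ (∀ x ∈ Icc (0:ℝ) 1, 0 < φ' x) ∧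
      StrictMonoOn φ (Icc (0:ℝ) 1) :=
  stmt0_general β κ hκ φ φ' φ'' hd1 hd2 hode h0 h1
end

section
/- Fix κ̃ with 0 < κ̃ ≤ 1/π. For β > 0 set κ = κ̃/β and let m(β) = inf over J of F_{β,κ}. Then for every n ∈ ℕ, β^{−n} · ( m(β) − (1/β)·[ (1 − √(1 − 4κ̃²))/4 − (κ̃/2)·arcsin(2κ̃) ] ) → 0 as β → 0⁺. -/
open MeasureTheory Real Set Filter Topology

noncomputable section

/-- The admissible class `J`: `φ` is absolutely continuous on `[0,1]` with `φ 0 = 0`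
and derivative `g` belonging to `L²((0,1))` (equivalently, `φ x = ∫₀ˣ g` on `[0,1]`
with `g` and `g²` integrable on `(0,1)`). -/
def MemJ (φ g : ℝ → ℝ) : Prop :=
  (∀ x ∈ Icc (0:ℝ) 1, φ x = ∫ t in (0:ℝ)..x, g t) ∧
  IntervalIntegrable g volume 0 1 ∧
  IntervalIntegrable (fun t => (g t) ^ 2) volume 0 1

/-- The functional `F_{β,κ}(φ) = (1/8)∫₀¹ (φ'² + β⁻² sin² φ) − (κ/2)∫₀¹ φ'`,
written in terms of `φ` and its derivative `g`. -/
def Fenergy (β κ : ℝ) (φ g : ℝ → ℝ) : ℝ :=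
  (1 / 8) * (∫ x in (0:ℝ)..1, ((g x) ^ 2 + (1 / β ^ 2) * Real.sin (φ x) ^ 2)) -
    (κ / 2) * (∫ x in (0:ℝ)..1, g x)

/-- `(φ, g)` minimizes `F_{β,κ}` over the class `J`. -/
def IsMinJ (β κ : ℝ) (φ g : ℝ → ℝ) : Prop :=
  MemJ φ g ∧ ∀ ψ h : ℝ → ℝ, MemJ ψ h → Fenergy β κ φ g ≤ Fenergy β κ ψ h

/-- The infimum of `F_{β,κ}` over the class `J`. -/
def minF (β κ : ℝ) : ℝ :=
  sInf {E : ℝ | ∃ φ g : ℝ → ℝ, MemJ φ g ∧ Fenergy β κ φ g = E}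

/-!
Write `w_k(θ) = V(θ)/4 - kθ/2` (`calibration k`), where `V(θ)` is the integral of `|sin|` over
the interval between `0` and `θ` (`cosVariation`). By AM–GM,
`(φ'² + β⁻² sin² φ)/8 - (k/2β) φ' ≥ β⁻¹ w_k'(φ) φ'`, so by the chain rule for absolutely
continuous functions `F_{β,k/β}(φ) ≥ β⁻¹ w_k(φ 1)`. For `k ≤ 1/π` every half-turn raises `w_k` by
`(1 - kπ)/2 ≥ 0`, so `w_k` is minimal at `arcsin 2k`, where it equals the bracket in the theorem.
Conversely, the heteroclinic `2 arctan (c e^{x/β})` of `β φ' = sin φ` is an equality case of the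
AM–GM step; tuned to reach `arcsin 2k` at `x = 1` and shifted to start at `0`, it costs only
`O(β⁻² e^{-1/β})` more, which is smaller than any power of `β`.
-/

open intervalIntegral
open scoped NNReal

theorem LipschitzWith.comp_absolutelyContinuousOnInterval {X Y : Type*} [PseudoMetricSpace X]
    [PseudoMetricSpace Y] {w : X → Y} {K : ℝ≥0} (hw : LipschitzWith K w) {f : ℝ → X}
    {a b : ℝ} (hf : AbsolutelyContinuousOnInterval f a b) :
    AbsolutelyContinuousOnInterval (w ∘ f) a b := by
  unfold AbsolutelyContinuousOnInterval at hf ⊢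
  have hK := hf.const_mul (K : ℝ)
  rw [mul_zero] at hK
  refine squeeze_zero (fun _ ↦ Finset.sum_nonneg fun _ _ ↦ dist_nonneg) (fun E ↦ ?_) hK
  rw [Finset.mul_sum]
  exact Finset.sum_le_sum fun i _ ↦ hw.dist_le_mul _ _

/-- The primitive `∫ₐ g` is only absolutely continuous, so this chain rule holds only almost
everywhere; the Lipschitz bound keeps `w ∘ ∫ₐ g` absolutely continuous. -/
theorem integral_comp_primitive_mul {w q g : ℝ → ℝ} {K : ℝ≥0} {a b : ℝ}
    (hw : ∀ θ, HasDerivAt w (q θ) θ) (hwK : LipschitzWith K w)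
    (hg : IntervalIntegrable g volume a b) :
    ∫ x in a..b, q (∫ t in a..x, g t) * g x = w (∫ t in a..b, g t) - w 0 := by
  have hΦ := hg.absolutelyContinuousOnInterval_intervalIntegral (c := a) (by simp)
  have hFTC := (hwK.comp_absolutelyContinuousOnInterval hΦ).integral_deriv_eq_sub
  simp only [Function.comp_apply, integral_same] at hFTC
  rw [← hFTC]
  refine integral_congr_ae ?_
  filter_upwards [hg.ae_hasDerivAt_integral] with x hx hxab
  exact ((hw _).comp x (hx (uIoc_subset_uIcc hxab) a left_mem_uIcc)).deriv.symm

def oddAbsSin (t : ℝ) : ℝ := if 0 ≤ t then |sin t| else -|sin t|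

theorem continuous_oddAbsSin : Continuous oddAbsSin :=
  continuous_sin.abs.if_le continuous_sin.abs.neg continuous_const continuous_id
    fun x hx ↦ by simp [← hx]

theorem abs_oddAbsSin (t : ℝ) : |oddAbsSin t| = |sin t| := by
  unfold oddAbsSin; split_ifs <;> simp

theorem oddAbsSin_nonpos {t : ℝ} (ht : t ≤ 0) : oddAbsSin t ≤ 0 := by
  unfold oddAbsSin; split_ifs with h
  · simp [le_antisymm ht h]
  · simp

/-- The total variation of `cos` between `0` and `θ`. -/
def cosVariation (θ : ℝ) : ℝ := ∫ t in (0 : ℝ)..θ, oddAbsSin t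

theorem hasDerivAt_cosVariation (θ : ℝ) : HasDerivAt cosVariation (oddAbsSin θ) θ :=
  (continuous_oddAbsSin.integral_hasStrictDerivAt 0 θ).hasDerivAt

theorem cosVariation_eq {θ : ℝ} (h0 : 0 ≤ θ) (hπ : θ ≤ π) : cosVariation θ = 1 - cos θ := by
  rw [cosVariation, ← cos_zero, ← integral_sin]
  refine integral_congr fun t ht ↦ ?_
  rw [uIcc_of_le h0] at ht
  rw [oddAbsSin, if_pos ht.1,
    abs_of_nonneg (sin_nonneg_of_nonneg_of_le_pi ht.1 (ht.2.trans hπ))]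

theorem cosVariation_add_pi {θ : ℝ} (h0 : 0 ≤ θ) :
    cosVariation (θ + π) = cosVariation θ + 2 := by
  have hπ : (∫ t in θ..θ + π, oddAbsSin t) = 2 := by
    calc (∫ t in θ..θ + π, oddAbsSin t) = ∫ t in θ..θ + π, |sin t| := by
          refine integral_congr fun t ht ↦ if_pos ?_
          rw [uIcc_of_le (by linarith [pi_pos])] at ht
          exact h0.trans ht.1
      _ = ∫ t in (0 : ℝ)..0 + π, |sin t| :=
          (Function.Periodic.intervalIntegral_add_eq (fun x ↦ by simp [sin_add_pi]) θ 0)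
      _ = 2 := by
          rw [zero_add, show (2 : ℝ) = ∫ t in (0 : ℝ)..π, sin t by norm_num [integral_sin]]
          refine integral_congr fun t ht ↦ ?_
          rw [uIcc_of_le pi_pos.le] at ht
          exact abs_of_nonneg (sin_nonneg_of_nonneg_of_le_pi ht.1 ht.2)
  rw [cosVariation, cosVariation, ← integral_add_adjacent_intervals
    (continuous_oddAbsSin.intervalIntegrable 0 θ) (continuous_oddAbsSin.intervalIntegrable _ _),
    hπ]

theorem cosVariation_nonneg_of_nonpos {θ : ℝ} (hθ : θ ≤ 0) : 0 ≤ cosVariation θ := by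
  rw [cosVariation, integral_symm, ← intervalIntegral.integral_neg]
  exact integral_nonneg hθ fun t ht ↦ neg_nonneg.2 (oddAbsSin_nonpos ht.2)

def calibration (k θ : ℝ) : ℝ := cosVariation θ / 4 - k * θ / 2

theorem hasDerivAt_calibration (k θ : ℝ) :
    HasDerivAt (calibration k) (oddAbsSin θ / 4 - k / 2) θ :=
  (((hasDerivAt_cosVariation θ).div_const 4).fun_sub
    (((hasDerivAt_id' θ).const_mul k).div_const 2)).congr_deriv (by ring)

theorem exists_lipschitzWith_calibration (k : ℝ) : ∃ K, LipschitzWith K (calibration k) := by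
  refine ⟨‖(4 : ℝ)⁻¹‖₊ + ‖k / 2‖₊, lipschitzWith_of_nnnorm_deriv_le
    (fun θ ↦ (hasDerivAt_calibration k θ).differentiableAt) fun θ ↦ ?_⟩
  rw [(hasDerivAt_calibration k θ).deriv, div_eq_mul_inv, ← NNReal.coe_le_coe]
  refine (nnnorm_sub_le _ _).trans ?_
  gcongr
  rw [nnnorm_mul]
  refine mul_le_of_le_one_left (by positivity) ?_
  rw [← NNReal.coe_le_one, coe_nnnorm, Real.norm_eq_abs, abs_oddAbsSin]
  exact abs_sin_le_one θ

theorem calibration_zero (k : ℝ) : calibration k 0 = 0 := by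
  simp [calibration, cosVariation]

theorem calibration_eq {k θ : ℝ} (h0 : 0 ≤ θ) (hπ : θ ≤ π) :
    calibration k θ = (1 - cos θ) / 4 - k * θ / 2 := by
  rw [calibration, cosVariation_eq h0 hπ]

theorem calibration_add_pi (k : ℝ) {θ : ℝ} (h0 : 0 ≤ θ) :
    calibration k (θ + π) = calibration k θ + (1 - k * π) / 2 := by
  rw [calibration, calibration, cosVariation_add_pi h0]
  ring

theorem cos_sub_cos_le_mul {a b c : ℝ} (hab : a ≤ b) (h : ∀ t ∈ Icc a b, sin t ≤ c) :
    cos a - cos b ≤ c * (b - a) :=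
  calc cos a - cos b = ∫ t in a..b, sin t := integral_sin.symm
    _ ≤ ∫ _ in a..b, c :=
      integral_mono_on hab (continuous_sin.intervalIntegrable _ _) intervalIntegrable_const h
    _ = c * (b - a) := by simp [mul_comm]

theorem mul_le_cos_sub_cos {a b c : ℝ} (hab : a ≤ b) (h : ∀ t ∈ Icc a b, c ≤ sin t) :
    c * (b - a) ≤ cos a - cos b :=
  calc c * (b - a) = ∫ _ in a..b, c := by simp [mul_comm]
    _ ≤ ∫ t in a..b, sin t :=
      integral_mono_on hab intervalIntegrable_const (continuous_sin.intervalIntegrable _ _) h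
    _ = cos a - cos b := integral_sin

/-- On `[0, π]`, `θ ↦ 1 - cos θ - 2kθ` decreases up to `arcsin (2k)`, then increases up to
`π - arcsin (2k)`, then decreases to its value `2 - 2kπ ≥ 0` at `π`. -/
theorem calibration_arcsin_le_of_mem_Icc {k θ : ℝ} (hk0 : 0 ≤ k) (hk : k ≤ 1 / π) (h0 : 0 ≤ θ)
    (hπ : θ ≤ π) : calibration k (arcsin (2 * k)) ≤ calibration k θ := by
  have hkπ : k * π ≤ 1 := (le_div_iff₀ pi_pos).1 hk
  have hk1 : 2 * k ≤ 1 := by nlinarith [pi_gt_three]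
  set θ₀ := arcsin (2 * k)
  have hθ₀ : 0 ≤ θ₀ := arcsin_nonneg.2 (by linarith)
  have hθ₀π : θ₀ ≤ π / 2 := arcsin_le_pi_div_two _
  have hsin : sin θ₀ = 2 * k := sin_arcsin (by linarith) hk1
  have sin_le : ∀ t ∈ Icc 0 θ₀, sin t ≤ 2 * k := fun t ht ↦
    hsin ▸ sin_le_sin_of_le_of_le_pi_div_two (by linarith [ht.1, pi_pos]) hθ₀π ht.2
  have le_sin : ∀ t ∈ Icc θ₀ (π - θ₀), 2 * k ≤ sin t := by
    intro t ht
    rcases le_total t (π / 2) with h | h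
    · exact hsin ▸ sin_le_sin_of_le_of_le_pi_div_two (by linarith [pi_pos]) h ht.1
    · rw [← sin_pi_sub]
      exact hsin ▸ sin_le_sin_of_le_of_le_pi_div_two (by linarith [pi_pos]) (by linarith)
        (by linarith [ht.2])
  have hθ₀_le_zero : cos 0 - cos θ₀ ≤ 2 * k * (θ₀ - 0) := cos_sub_cos_le_mul hθ₀ sin_le
  rw [calibration_eq hθ₀ (by linarith), calibration_eq h0 hπ]
  rcases le_total θ θ₀ with h₁ | h₁
  · have := cos_sub_cos_le_mul h₁ fun t ht ↦ sin_le t ⟨h0.trans ht.1, ht.2⟩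
    linarith
  rcases le_total θ (π - θ₀) with h₂ | h₂
  · have := mul_le_cos_sub_cos h₁ fun t ht ↦ le_sin t ⟨ht.1, ht.2.trans h₂⟩
    linarith
  · have := cos_sub_cos_le_mul hπ fun t ht ↦
      sin_pi_sub t ▸ sin_le (π - t) ⟨by linarith [ht.2], by linarith [ht.1]⟩
    rw [cos_zero] at hθ₀_le_zero
    rw [cos_pi] at this
    linarith

theorem calibration_arcsin_le {k : ℝ} (hk0 : 0 ≤ k) (hk : k ≤ 1 / π) (θ : ℝ) :
    calibration k (arcsin (2 * k)) ≤ calibration k θ := by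
  have hkπ : k * π ≤ 1 := (le_div_iff₀ pi_pos).1 hk
  have hshift : ∀ n : ℕ, ∀ θ ∈ Icc 0 π,
      calibration k (arcsin (2 * k)) ≤ calibration k (θ + n * π) := by
    intro n
    induction n with
    | zero =>
      intro θ hθ
      simpa using calibration_arcsin_le_of_mem_Icc hk0 hk hθ.1 hθ.2
    | succ n ih =>
      intro θ hθ
      have hnπ : 0 ≤ θ + n * π := by have := hθ.1; positivity
      rw [Nat.cast_succ, add_one_mul, ← add_assoc, calibration_add_pi k hnπ]
      linarith [ih θ hθ]
  rcases le_total 0 θ with h0 | h0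
  · set n := ⌊θ / π⌋₊
    have hn : n * π ≤ θ := (le_div_iff₀ pi_pos).1 (Nat.floor_le (by positivity))
    have hn' : θ < n * π + π := by
      have := Nat.lt_floor_add_one (θ / π)
      rw [div_lt_iff₀ pi_pos] at this
      linarith
    simpa using hshift n (θ - n * π) ⟨by linarith, by linarith⟩
  · calc calibration k (arcsin (2 * k)) ≤ calibration k 0 :=
          calibration_arcsin_le_of_mem_Icc hk0 hk le_rfl pi_pos.le
      _ = 0 := calibration_zero k
      _ ≤ calibration k θ := by
          have := mul_nonpos_of_nonneg_of_nonpos hk0 h0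
          rw [calibration]
          linarith [cosVariation_nonneg_of_nonpos h0]

theorem MemJ.continuousOn {φ g : ℝ → ℝ} (h : MemJ φ g) : ContinuousOn φ (Icc 0 1) := by
  have := continuousOn_primitive_interval' h.2.1 left_mem_uIcc
  rw [uIcc_of_le zero_le_one] at this
  exact this.congr h.1

theorem MemJ.integral_comp_mul {φ g w q : ℝ → ℝ} {K : ℝ≥0} (h : MemJ φ g)
    (hw : ∀ θ, HasDerivAt w (q θ) θ) (hwK : LipschitzWith K w) :
    ∫ x in (0 : ℝ)..1, q (φ x) * g x = w (φ 1) - w 0 := by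
  rw [h.1 1 (by simp), ← integral_comp_primitive_mul hw hwK h.2.1]
  refine integral_congr fun x hx ↦ ?_
  rw [uIcc_of_le zero_le_one] at hx
  simp only [h.1 x hx]

theorem calibration_density_le {β : ℝ} (hβ : 0 < β) (k θ s : ℝ) :
    (oddAbsSin θ / 4 - k / 2) * s / β ≤
      1 / 8 * (s ^ 2 + 1 / β ^ 2 * sin θ ^ 2) - k / β / 2 * s := by
  have hsin : oddAbsSin θ * s ≤ |sin θ| * |s| := by
    rw [← abs_oddAbsSin, ← abs_mul]
    exact le_abs_self _
  have hAMGM : 2 * (oddAbsSin θ * s) * β ≤ s ^ 2 * β ^ 2 + sin θ ^ 2 :=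
    calc 2 * (oddAbsSin θ * s) * β ≤ 2 * (|sin θ| * |s|) * β := by gcongr
      _ ≤ s ^ 2 * β ^ 2 + sin θ ^ 2 := by
        nlinarith [sq_nonneg (|s| * β - |sin θ|), sq_abs s, sq_abs (sin θ)]
  have hdiff : 1 / 8 * (s ^ 2 + 1 / β ^ 2 * sin θ ^ 2) - k / β / 2 * s
      - (oddAbsSin θ / 4 - k / 2) * s / β
      = (s ^ 2 * β ^ 2 + sin θ ^ 2 - 2 * (oddAbsSin θ * s) * β) / (8 * β ^ 2) := by
    field_simp
    ring
  have : 0 ≤ (s ^ 2 * β ^ 2 + sin θ ^ 2 - 2 * (oddAbsSin θ * s) * β) / (8 * β ^ 2) :=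
    div_nonneg (by linarith) (by positivity)
  linarith

theorem calibration_div_le_Fenergy {β : ℝ} (hβ : 0 < β) (k : ℝ) {φ g : ℝ → ℝ}
    (h : MemJ φ g) :
    calibration k (φ 1) / β ≤ Fenergy β (k / β) φ g := by
  obtain ⟨K, hK⟩ := exists_lipschitzWith_calibration k
  have hφ : ContinuousOn φ (uIcc 0 1) := by rw [uIcc_of_le zero_le_one]; exact h.continuousOn
  have hsin : IntervalIntegrable (fun x ↦ 1 / β ^ 2 * sin (φ x) ^ 2) volume 0 1 :=
    (continuousOn_const.mul ((continuous_sin.comp_continuousOn hφ).pow 2)).intervalIntegrable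
  have hq : IntervalIntegrable (fun x ↦ (oddAbsSin (φ x) / 4 - k / 2) * g x) volume 0 1 :=
    h.2.1.continuousOn_mul
      (((continuous_oddAbsSin.comp_continuousOn hφ).div_const 4).sub continuousOn_const)
  calc calibration k (φ 1) / β
      = (∫ x in (0 : ℝ)..1, (oddAbsSin (φ x) / 4 - k / 2) * g x) / β := by
        rw [h.integral_comp_mul (hasDerivAt_calibration k) hK, calibration_zero, sub_zero]
    _ = ∫ x in (0 : ℝ)..1, (oddAbsSin (φ x) / 4 - k / 2) * g x / β :=
        (intervalIntegral.integral_div _ _).symm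
    _ ≤ ∫ x in (0 : ℝ)..1,
          (1 / 8 * (g x ^ 2 + 1 / β ^ 2 * sin (φ x) ^ 2) - k / β / 2 * g x) :=
        integral_mono_on zero_le_one (hq.div_const β)
          (((h.2.2.add hsin).const_mul _).sub (h.2.1.const_mul _))
          fun x _ ↦ calibration_density_le hβ k (φ x) (g x)
    _ = Fenergy β (k / β) φ g := by
        rw [integral_sub ((h.2.2.add hsin).const_mul _) (h.2.1.const_mul _),
          intervalIntegral.integral_const_mul, intervalIntegral.integral_const_mul]
        rfl

theorem sin_two_mul_arctan (y : ℝ) : sin (2 * arctan y) = 2 * y / (1 + y ^ 2) := by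
  have h : 0 < 1 + y ^ 2 := by positivity
  rw [sin_two_mul, sin_arctan, cos_arctan]
  field_simp
  rw [sq_sqrt h.le]

theorem sin_sq_sub_sin_sq_le (u v : ℝ) : sin u ^ 2 - sin v ^ 2 ≤ 2 * |u - v| := by
  have hsum : |sin u + sin v| ≤ 2 := by
    rw [abs_le]
    constructor <;> linarith [neg_one_le_sin u, sin_le_one u, neg_one_le_sin v, sin_le_one v]
  calc sin u ^ 2 - sin v ^ 2 ≤ |(sin u - sin v) * (sin u + sin v)| :=
        (le_of_eq (by ring)).trans (le_abs_self _)
    _ ≤ |u - v| * 2 := by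
        rw [abs_mul]
        exact mul_le_mul (abs_sin_sub_sin_le u v) hsum (abs_nonneg _) (abs_nonneg _)
    _ = 2 * |u - v| := mul_comm _ _

theorem sin_div_sq_add_sin_sub_sq_le (β θ : ℝ) {a : ℝ} (ha : 0 ≤ a) :
    (sin θ / β) ^ 2 + 1 / β ^ 2 * sin (θ - a) ^ 2 ≤
      2 / β * (sin θ * (sin θ / β)) + 2 * a / β ^ 2 := by
  have hsq := sin_sq_sub_sin_sq_le (θ - a) θ
  rw [sub_sub_cancel_left, abs_neg, abs_of_nonneg ha] at hsq
  have : 1 / β ^ 2 * sin (θ - a) ^ 2 ≤ 1 / β ^ 2 * (sin θ ^ 2 + 2 * a) :=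
    mul_le_mul_of_nonneg_left (by linarith) (by positivity)
  have hsplit : 2 / β * (sin θ * (sin θ / β)) + 2 * a / β ^ 2 =
      (sin θ / β) ^ 2 + 1 / β ^ 2 * (sin θ ^ 2 + 2 * a) := by ring
  linarith

/-- The heteroclinic solution of `β φ' = sin φ`, which connects `0` (at `x = -∞`) to `π`. -/
def kink (β c x : ℝ) : ℝ := 2 * arctan (c * exp (x / β))

theorem continuous_kink (β c : ℝ) : Continuous (kink β c) := by
  unfold kink; fun_prop

theorem hasDerivAt_kink (β c x : ℝ) : HasDerivAt (kink β c) (sin (kink β c x) / β) x := by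
  have h := (((hasDerivAt_id' x).div_const β).exp.const_mul c).arctan.const_mul 2
  refine h.congr_deriv ?_
  rw [kink, sin_two_mul_arctan]
  field_simp

theorem kink_zero_le {β c : ℝ} (hc : 0 ≤ c) : kink β c 0 ≤ 2 * c := by
  have h := le_tan (arctan_nonneg.2 hc) (arctan_lt_pi_div_two c)
  rw [tan_arctan] at h
  simpa [kink] using h

theorem kink_one {β θ : ℝ} (h₁ : -π < θ) (h₂ : θ < π) :
    kink β (tan (θ / 2) * exp (-β⁻¹)) 1 = θ := by
  rw [kink, mul_assoc, ← exp_add, one_div, neg_add_cancel, exp_zero, mul_one,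
    arctan_tan (by linarith) (by linarith)]
  ring

theorem memJ_sub_apply_zero {φ g : ℝ → ℝ} (hφ : ∀ x, HasDerivAt φ (g x) x)
    (hg : Continuous g) :
    MemJ (fun x ↦ φ x - φ 0) g :=
  ⟨fun x _ ↦ (integral_eq_sub_of_hasDerivAt (fun t _ ↦ hφ t) (hg.intervalIntegrable 0 x)).symm,
    hg.intervalIntegrable 0 1, (hg.pow 2).intervalIntegrable 0 1⟩

theorem Fenergy_kink_le {β : ℝ} (hβ : 0 < β) (κ : ℝ) {c : ℝ} (hc : 0 ≤ c) :
    Fenergy β κ (fun x ↦ kink β c x - kink β c 0) (fun x ↦ sin (kink β c x) / β) ≤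
      (1 - cos (kink β c 1)) / (4 * β) - κ / 2 * kink β c 1 +
        kink β c 0 * (1 / (4 * β ^ 2) + κ / 2) := by
  set φ := kink β c
  set g := fun x ↦ sin (φ x) / β
  set a := φ 0
  have ha : 0 ≤ a := by simpa [a, φ, kink] using hc
  have hφ : Continuous φ := continuous_kink β c
  have hg : Continuous g := (continuous_sin.comp hφ).div_const β
  have hint (f : ℝ → ℝ) (hf : Continuous f) : IntervalIntegrable f volume 0 1 :=
    hf.intervalIntegrable 0 1
  have hI_g : ∫ x in (0 : ℝ)..1, g x = φ 1 - a :=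
    integral_eq_sub_of_hasDerivAt (fun x _ ↦ hasDerivAt_kink β c x) (hg.intervalIntegrable 0 1)
  have hI_sin : ∫ x in (0 : ℝ)..1, sin (φ x) * g x = cos a - cos (φ 1) := by
    have hd : ∀ x ∈ uIcc (0 : ℝ) 1, HasDerivAt (fun y ↦ -cos (φ y)) (sin (φ x) * g x) x :=
      fun x _ ↦ ((hasDerivAt_kink β c x).cos.neg).congr_deriv (by ring)
    rw [integral_eq_sub_of_hasDerivAt hd (hint _ (by fun_prop))]
    ring
  have hE : ∫ x in (0 : ℝ)..1, (g x ^ 2 + 1 / β ^ 2 * sin (φ x - a) ^ 2) ≤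
      2 / β * (cos a - cos (φ 1)) + 2 * a / β ^ 2 := by
    calc _ ≤ ∫ x in (0 : ℝ)..1, (2 / β * (sin (φ x) * g x) + 2 * a / β ^ 2) :=
          integral_mono_on zero_le_one (hint _ (by fun_prop)) (hint _ (by fun_prop))
            fun x _ ↦ sin_div_sq_add_sin_sub_sq_le β (φ x) ha
      _ = _ := by
          rw [integral_add (hint _ (by fun_prop)) intervalIntegrable_const,
            intervalIntegral.integral_const_mul, hI_sin]
          simp
  have hcos : cos a ≤ 1 := cos_le_one a
  unfold Fenergy
  rw [hI_g]
  calc 1 / 8 * (∫ x in (0 : ℝ)..1, (g x ^ 2 + 1 / β ^ 2 * sin (φ x - a) ^ 2))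
        - κ / 2 * (φ 1 - a)
      ≤ 1 / 8 * (2 / β * (cos a - cos (φ 1)) + 2 * a / β ^ 2) - κ / 2 * (φ 1 - a) := by
        linarith
    _ = (cos a - cos (φ 1)) / (4 * β) - κ / 2 * φ 1 + a * (1 / (4 * β ^ 2) + κ / 2) := by
        field_simp; ring
    _ ≤ _ := by gcongr

theorem exists_memJ_Fenergy_le {β k θ : ℝ} (hβ : 0 < β) (hk : 0 ≤ k) (h0 : 0 ≤ θ)
    (hπ : θ < π) :
    ∃ φ g, MemJ φ g ∧ Fenergy β (k / β) φ g ≤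
      calibration k θ / β + 2 * tan (θ / 2) * (β⁻¹ ^ 2 / 4 + k / 2 * β⁻¹) * exp (-β⁻¹) := by
  set c := tan (θ / 2) * exp (-β⁻¹)
  have hc : 0 ≤ c :=
    mul_nonneg (tan_nonneg_of_nonneg_of_le_pi_div_two (by linarith) (by linarith)) (exp_pos _).le
  refine ⟨_, _, memJ_sub_apply_zero (hasDerivAt_kink β c) ((continuous_sin.comp
    (continuous_kink β c)).div_const β), (Fenergy_kink_le hβ (k / β) hc).trans ?_⟩
  rw [kink_one (by linarith [pi_pos]) hπ, calibration_eq h0 hπ.le]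
  calc (1 - cos θ) / (4 * β) - k / β / 2 * θ + kink β c 0 * (1 / (4 * β ^ 2) + k / β / 2)
      ≤ (1 - cos θ) / (4 * β) - k / β / 2 * θ + 2 * c * (1 / (4 * β ^ 2) + k / β / 2) := by
        gcongr
        exact kink_zero_le hc
    _ = _ := by
        simp only [c]
        field_simp

theorem minF_mem_Icc {β k : ℝ} (hβ : 0 < β) (hk0 : 0 ≤ k) (hk : k ≤ 1 / π) :
    minF β (k / β) ∈ Icc (calibration k (arcsin (2 * k)) / β)
      (calibration k (arcsin (2 * k)) / β +
        2 * tan (arcsin (2 * k) / 2) * (β⁻¹ ^ 2 / 4 + k / 2 * β⁻¹) * exp (-β⁻¹)) := by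
  obtain ⟨φ, g, hJ, hF⟩ := exists_memJ_Fenergy_le (θ := arcsin (2 * k)) hβ hk0
    (arcsin_nonneg.2 (by positivity)) ((arcsin_le_pi_div_two _).trans_lt (by linarith [pi_pos]))
  have hlow : ∀ E ∈ {E | ∃ φ g, MemJ φ g ∧ Fenergy β (k / β) φ g = E},
      calibration k (arcsin (2 * k)) / β ≤ E := by
    rintro _ ⟨ψ, h, hJ', rfl⟩
    exact (div_le_div_of_nonneg_right (calibration_arcsin_le hk0 hk _) hβ.le).trans
      (calibration_div_le_Fenergy hβ k hJ')
  exact ⟨le_csInf ⟨_, φ, g, hJ, rfl⟩ hlow, (csInf_le ⟨_, hlow⟩ ⟨φ, g, hJ, rfl⟩).trans hF⟩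

theorem tendsto_inv_pow_mul_exp_neg_inv (m : ℕ) :
    Tendsto (fun β : ℝ ↦ β⁻¹ ^ m * exp (-β⁻¹)) (𝓝[>] 0) (𝓝 0) :=
  (tendsto_pow_mul_exp_neg_atTop_nhds_zero m).comp tendsto_inv_nhdsGT_zero

theorem calibration_arcsin {k : ℝ} (hk0 : 0 ≤ k) :
    calibration k (arcsin (2 * k)) =
      (1 - √(1 - 4 * k ^ 2)) / 4 - k / 2 * arcsin (2 * k) := by
  rw [calibration_eq (arcsin_nonneg.2 (by linarith))
    ((arcsin_le_pi_div_two _).trans (by linarith [pi_pos])), cos_arcsin]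
  ring_nf

/-- Fix `κ̃` with `0 < κ̃ ≤ 1/π`.  For `β > 0` set `κ = κ̃/β` and let
`m(β) = inf_J F_{β,κ}`.  Then for every `n ∈ ℕ`,
`β⁻ⁿ (m(β) − (1/β)[(1 − √(1 − 4κ̃²))/4 − (κ̃/2) arcsin(2κ̃)]) → 0` as `β → 0⁺`. -/
theorem stmt1 (κt : ℝ) (h1 : 0 < κt) (h2 : κt ≤ 1 / π) (n : ℕ) :
    Tendsto (fun β : ℝ =>
        (minF β (κt / β) -
            (1 / β) * ((1 - Real.sqrt (1 - 4 * κt ^ 2)) / 4 -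
              (κt / 2) * Real.arcsin (2 * κt))) / β ^ n)
      (𝓝[>] (0:ℝ)) (𝓝 0) := by
  set C := 2 * tan (arcsin (2 * κt) / 2)
  rw [← calibration_arcsin h1.le]
  have hlim : Tendsto (fun β : ℝ ↦ C * (β⁻¹ ^ 2 / 4 + κt / 2 * β⁻¹) * exp (-β⁻¹) / β ^ n)
      (𝓝[>] 0) (𝓝 0) := by
    have hsum := ((tendsto_inv_pow_mul_exp_neg_inv (n + 2)).div_const 4).add
      ((tendsto_inv_pow_mul_exp_neg_inv (n + 1)).const_mul (κt / 2)) |>.const_mul C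
    rw [zero_div, mul_zero, zero_add, mul_zero] at hsum
    refine hsum.congr' (eventually_nhdsWithin_of_forall fun β (hβ : 0 < β) ↦ ?_)
    simp only [inv_pow, pow_add]
    field_simp
  refine squeeze_zero' ?_ ?_ hlim <;> filter_upwards [self_mem_nhdsWithin] with β (hβ : 0 < β)
    <;> obtain ⟨hlow, hup⟩ := minF_mem_Icc hβ h1.le h2
  · exact div_nonneg (by rw [one_div_mul_eq_div]; linarith) (by positivity)
  · exact div_le_div_of_nonneg_right (by rw [one_div_mul_eq_div]; linarith) (by positivity)
end
end

section
/- As α → 0⁺ one has the asymptotic equivalence ∫₀^{π/2} √(α² + sin²y) dy − 1 ∼ (α²/2)·log(1/α); that is, the quotient ( ∫₀^{π/2} √(α² + sin²y) dy − 1 ) / ( (α²/2) log(1/α) ) tends to 1 as α → 0⁺. -/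
open MeasureTheory Real Set Filter Topology

noncomputable def gg (α y : ℝ) : ℝ := (Real.sqrt (α ^ 2 + Real.sin y ^ 2) + Real.sin y)⁻¹

lemma denom_pos {α : ℝ} (hα : 0 < α) (y : ℝ) :
    0 < Real.sqrt (α ^ 2 + Real.sin y ^ 2) + Real.sin y := by
  have h1 : |Real.sin y| < Real.sqrt (α ^ 2 + Real.sin y ^ 2) := by
    rw [← Real.sqrt_sq_eq_abs]
    exact Real.sqrt_lt_sqrt (sq_nonneg _) (by nlinarith)
  have := neg_abs_le (Real.sin y)
  linarith

lemma cont_gg {α : ℝ} (hα : 0 < α) : Continuous (gg α) := by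
  apply Continuous.inv₀
  · exact ((Real.continuous_sqrt.comp (by continuity)).add Real.continuous_sin)
  · exact fun y => (denom_pos hα y).ne'

lemma ident {α : ℝ} (hα : 0 < α) :
    (∫ y in (0:ℝ)..(π / 2), Real.sqrt (α ^ 2 + Real.sin y ^ 2)) - 1
      = α ^ 2 * ∫ y in (0:ℝ)..(π / 2), gg α y := by
  have hsin : (∫ y in (0:ℝ)..(π / 2), Real.sin y) = 1 := by
    simp [integral_sin]
  have hi1 : IntervalIntegrable (fun y => Real.sqrt (α ^ 2 + Real.sin y ^ 2)) volume 0 (π/2) :=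
    (Real.continuous_sqrt.comp (by continuity)).intervalIntegrable _ _
  have hi2 : IntervalIntegrable Real.sin volume 0 (π/2) :=
    Real.continuous_sin.intervalIntegrable _ _
  rw [← intervalIntegral.integral_const_mul]
  nth_rewrite 1 [← hsin]
  rw [← intervalIntegral.integral_sub hi1 hi2]
  apply intervalIntegral.integral_congr
  intro y _
  have hd := denom_pos hα y
  have hsq : Real.sqrt (α ^ 2 + Real.sin y ^ 2) ^ 2 = α ^ 2 + Real.sin y ^ 2 :=
    Real.sq_sqrt (by positivity)
  simp only [gg]
  field_simp
  nlinarith [hsq]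

lemma lower_bd {α : ℝ} (hα : 0 < α) :
    (1/2 : ℝ) * (Real.log (α + π) - Real.log α) ≤ ∫ y in (0:ℝ)..(π / 2), gg α y := by
  have hπ := Real.pi_pos
  have hint : (∫ y in (0:ℝ)..(π / 2), (2 * y + α)⁻¹)
      = (1/2 : ℝ) * (Real.log (α + π) - Real.log α) := by
    rw [intervalIntegral.integral_comp_mul_add (fun x => x⁻¹) two_ne_zero α]
    rw [integral_inv_of_pos (by linarith) (by linarith)]
    rw [Real.log_div (by linarith) (by linarith)]
    norm_num [smul_eq_mul]
    ring_nf
  rw [← hint]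
  apply intervalIntegral.integral_mono_on (by positivity)
  · apply ContinuousOn.intervalIntegrable
    apply ContinuousOn.inv₀ (by fun_prop)
    intro y hy
    rw [uIcc_of_le (by positivity)] at hy
    have := hy.1
    positivity
  · exact ((cont_gg hα).intervalIntegrable _ _)
  · intro y hy
    have hy0 : 0 ≤ y := hy.1
    have hs0 : 0 ≤ Real.sin y := Real.sin_nonneg_of_nonneg_of_le_pi hy0 (by linarith [hy.2])
    have hsy : Real.sin y ≤ y := Real.sin_le hy0
    have hsqle : Real.sqrt (α ^ 2 + Real.sin y ^ 2) ≤ α + Real.sin y := by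
      rw [show α + Real.sin y = Real.sqrt ((α + Real.sin y)^2) from
        (Real.sqrt_sq (by positivity)).symm]
      exact Real.sqrt_le_sqrt (by nlinarith)
    have hd := denom_pos hα y
    rw [gg]
    apply inv_anti₀ hd
    linarith

lemma sqrt_add_ge {α : ℝ} (hα : 0 < α) (y : ℝ) (hs : 0 ≤ Real.sin y) :
    Real.sin y ≤ Real.sqrt (α ^ 2 + Real.sin y ^ 2) := by
  rw [show Real.sin y = Real.sqrt ((Real.sin y)^2) from (Real.sqrt_sq hs).symm]
  apply Real.sqrt_le_sqrt; nlinarith [Real.sq_sqrt (sq_nonneg (Real.sin y))]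

lemma upper_bd {α δ : ℝ} (hα : 0 < α) (hαδ : α ≤ δ) (hδ : δ ≤ 1) :
    (∫ y in (0:ℝ)..(π / 2), gg α y)
      ≤ 1 + π / (4 * Real.sin δ) + (1 / (2 * Real.cos δ)) * (Real.log δ - Real.log α) := by
  have hπ := Real.pi_pos
  have hδ0 : 0 < δ := lt_of_lt_of_le hα hαδ
  have hδπ : δ < π / 2 := by nlinarith [Real.pi_gt_three]
  have hcos : 0 < Real.cos δ := Real.cos_pos_of_mem_Ioo ⟨by linarith, hδπ⟩
  have hsin : 0 < Real.sin δ := Real.sin_pos_of_pos_of_lt_pi hδ0 (by linarith)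
  have hii : ∀ a b : ℝ, IntervalIntegrable (gg α) volume a b :=
    fun a b => (cont_gg hα).intervalIntegrable a b
  have hsplit : (∫ y in (0:ℝ)..(π / 2), gg α y)
      = (∫ y in (0:ℝ)..α, gg α y) + (∫ y in α..δ, gg α y) + (∫ y in δ..(π/2), gg α y) := by
    rw [intervalIntegral.integral_add_adjacent_intervals (hii 0 α) (hii α δ),
        intervalIntegral.integral_add_adjacent_intervals (hii 0 δ) (hii δ (π/2))]
  rw [hsplit]
  have hb1 : (∫ y in (0:ℝ)..α, gg α y) ≤ 1 := by
    have : (∫ y in (0:ℝ)..α, gg α y) ≤ ∫ _ in (0:ℝ)..α, α⁻¹ := by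
      apply intervalIntegral.integral_mono_on hα.le (hii 0 α)
        (intervalIntegrable_const)
      intro y hy
      have hs0 : 0 ≤ Real.sin y := Real.sin_nonneg_of_nonneg_of_le_pi hy.1
        (by nlinarith [hy.2, Real.pi_gt_three])
      rw [gg]
      apply inv_anti₀ hα
      calc α = Real.sqrt (α ^ 2) := (Real.sqrt_sq hα.le).symm
        _ ≤ Real.sqrt (α ^ 2 + Real.sin y ^ 2) := Real.sqrt_le_sqrt (by nlinarith)
        _ ≤ _ := by linarith
    simpa [mul_inv_cancel₀ hα.ne'] using this
  have hb2 : (∫ y in α..δ, gg α y) ≤ (1 / (2 * Real.cos δ)) * (Real.log δ - Real.log α) := by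
    have hint : (∫ y in α..δ, (2 * Real.cos δ)⁻¹ * y⁻¹)
        = (1 / (2 * Real.cos δ)) * (Real.log δ - Real.log α) := by
      rw [intervalIntegral.integral_const_mul, integral_inv_of_pos hα hδ0,
          Real.log_div hδ0.ne' hα.ne']
      rw [one_div]
    rw [← hint]
    apply intervalIntegral.integral_mono_on hαδ (hii α δ)
    · apply ContinuousOn.intervalIntegrable
      apply ContinuousOn.mul continuousOn_const
      apply ContinuousOn.inv₀ continuousOn_id
      intro y hy
      rw [uIcc_of_le hαδ] at hy
      exact (lt_of_lt_of_le hα hy.1).ne'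
    · intro y hy
      have hy0 : 0 < y := lt_of_lt_of_le hα hy.1
      have hyδ : y ≤ δ := hy.2
      have hcosy : 0 < Real.cos y := Real.cos_pos_of_mem_Ioo ⟨by linarith, by linarith⟩
      have htan : y < Real.tan y := Real.lt_tan hy0 (by linarith)
      have hsy : y * Real.cos y ≤ Real.sin y := by
        rw [Real.tan_eq_sin_div_cos] at htan
        calc y * Real.cos y ≤ (Real.sin y / Real.cos y) * Real.cos y := by nlinarith
          _ = Real.sin y := by field_simp
      have hcosmono : Real.cos δ ≤ Real.cos y :=
        Real.cos_le_cos_of_nonneg_of_le_pi hy0.le (by linarith) hyδ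
      have hs0 : 0 ≤ Real.sin y := by nlinarith
      have := sqrt_add_ge hα y hs0
      rw [gg, ← mul_inv]
      apply inv_anti₀ (by positivity)
      nlinarith
  have hb3 : (∫ y in δ..(π/2), gg α y) ≤ π / (4 * Real.sin δ) := by
    have : (∫ y in δ..(π/2), gg α y) ≤ ∫ _ in δ..(π/2), (2 * Real.sin δ)⁻¹ := by
      apply intervalIntegral.integral_mono_on hδπ.le (hii δ (π/2)) intervalIntegrable_const
      intro y hy
      have hs : Real.sin δ ≤ Real.sin y :=
        Real.sin_le_sin_of_le_of_le_pi_div_two (by linarith) hy.2 hy.1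
      have hs0 : 0 ≤ Real.sin y := by linarith
      have := sqrt_add_ge hα y hs0
      rw [gg]
      apply inv_anti₀ (by positivity)
      linarith
    have h2 : (∫ _ in δ..(π/2), (2 * Real.sin δ)⁻¹) = (π/2 - δ) * (2 * Real.sin δ)⁻¹ := by
      simp [smul_eq_mul]; ring
    rw [h2] at this
    calc (∫ y in δ..(π/2), gg α y) ≤ (π/2 - δ) * (2 * Real.sin δ)⁻¹ := this
      _ ≤ (π/2) * (2 * Real.sin δ)⁻¹ := by
          apply mul_le_mul_of_nonneg_right (by linarith) (by positivity)
      _ = π / (4 * Real.sin δ) := by rw [div_eq_mul_inv, mul_inv]; ring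
  linarith

lemma log_inv_tendsto : Tendsto (fun α : ℝ => Real.log (1/α)) (𝓝[>] (0:ℝ)) atTop := by
  simp only [one_div, Real.log_inv]
  exact tendsto_neg_atBot_atTop.comp Real.tendsto_log_nhdsGT_zero

lemma key_div {A k D t : ℝ} (ht : t ≠ 0) :
    (A + k * (D + t)) / ((1/2 : ℝ) * t) = (A + k * D) * 2 * t⁻¹ + 2 * k := by
  field_simp
  ring

lemma key_div2 {A t : ℝ} (ht : t ≠ 0) :
    ((1/2 : ℝ) * (A + t)) / ((1/2 : ℝ) * t) = A * t⁻¹ + 1 := by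
  field_simp

lemma lo_tendsto : Tendsto (fun α : ℝ =>
    ((1/2 : ℝ) * (Real.log (α + π) - Real.log α)) / ((1/2 : ℝ) * Real.log (1/α)))
    (𝓝[>] (0:ℝ)) (𝓝 1) := by
  have hπ := Real.pi_pos
  have h1 : Tendsto (fun α : ℝ => (Real.log (1/α))⁻¹) (𝓝[>] (0:ℝ)) (𝓝 0) :=
    log_inv_tendsto.inv_tendsto_atTop
  have h2 : Tendsto (fun α : ℝ => Real.log (α + π)) (𝓝[>] (0:ℝ)) (𝓝 (Real.log π)) := by
    have hA : Tendsto (fun α : ℝ => α + π) (𝓝 (0:ℝ)) (𝓝 ((0:ℝ) + π)) :=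
      tendsto_id.add_const π
    have hA' : Tendsto (fun α : ℝ => α + π) (𝓝[>] (0:ℝ)) (𝓝 π) := by
      simpa using hA.mono_left nhdsWithin_le_nhds
    exact (Real.continuousAt_log hπ.ne').tendsto.comp hA'
  have h3 : Tendsto (fun α : ℝ => Real.log (α + π) * (Real.log (1/α))⁻¹ + 1)
      (𝓝[>] (0:ℝ)) (𝓝 1) := by
    have hmul : Tendsto (fun α : ℝ => Real.log (α + π) * (Real.log (1/α))⁻¹)
        (𝓝[>] (0:ℝ)) (𝓝 (Real.log π * 0)) := h2.mul h1
    have := hmul.add_const 1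
    simpa using this
  apply h3.congr'
  filter_upwards [Ioo_mem_nhdsGT one_pos] with α hα
  have hlogneg : Real.log α < 0 := Real.log_neg hα.1 hα.2
  have hL : Real.log (1/α) = -Real.log α := by rw [one_div, Real.log_inv]
  have hLne : -Real.log α ≠ 0 := by linarith
  rw [hL, show Real.log (α + π) - Real.log α = Real.log (α + π) + -Real.log α by ring,
    key_div2 hLne]

lemma up_tendsto {δ : ℝ} (hδ0 : 0 < δ) :
    Tendsto (fun α : ℝ =>
      (1 + π / (4 * Real.sin δ) + (1 / (2 * Real.cos δ)) * (Real.log δ - Real.log α))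
        / ((1/2 : ℝ) * Real.log (1/α)))
      (𝓝[>] (0:ℝ)) (𝓝 (1 / Real.cos δ)) := by
  have h1 : Tendsto (fun α : ℝ => (Real.log (1/α))⁻¹) (𝓝[>] (0:ℝ)) (𝓝 0) :=
    log_inv_tendsto.inv_tendsto_atTop
  set C : ℝ := (1 + π / (4 * Real.sin δ) + (1 / (2 * Real.cos δ)) * Real.log δ) * 2 with hC
  have h3 : Tendsto (fun α : ℝ => C * (Real.log (1/α))⁻¹ + 2 * (1 / (2 * Real.cos δ)))
      (𝓝[>] (0:ℝ)) (𝓝 (1 / Real.cos δ)) := by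
    have hmul : Tendsto (fun α : ℝ => C * (Real.log (1/α))⁻¹)
        (𝓝[>] (0:ℝ)) (𝓝 (C * 0)) := tendsto_const_nhds.mul h1
    have := hmul.add_const (2 * (1 / (2 * Real.cos δ)))
    have h2k : C * 0 + 2 * (1 / (2 * Real.cos δ)) = 1 / Real.cos δ := by
      rw [mul_zero, zero_add]; rw [one_div, one_div, mul_inv]; ring
    rwa [h2k] at this
  apply h3.congr'
  filter_upwards [Ioo_mem_nhdsGT one_pos] with α hα
  have hlogneg : Real.log α < 0 := Real.log_neg hα.1 hα.2
  have hL : Real.log (1/α) = -Real.log α := by rw [one_div, Real.log_inv]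
  have hLne : -Real.log α ≠ 0 := by linarith
  rw [hL, show Real.log δ - Real.log α = Real.log δ + -Real.log α by ring,
    show (1:ℝ) + π / (4 * Real.sin δ) + (1 / (2 * Real.cos δ)) * (Real.log δ + -Real.log α)
      = (1 + π / (4 * Real.sin δ)) + (1 / (2 * Real.cos δ)) * (Real.log δ + -Real.log α) by ring,
    key_div hLne, hC]

/-- As `α → 0⁺`,
`∫₀^{π/2} √(α² + sin²y) dy − 1 ∼ (α²/2) log(1/α)`; that is, the quotient tends to `1`. -/
theorem stmt16 :
    Tendsto (fun α : ℝ =>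
        ((∫ y in (0:ℝ)..(π / 2), Real.sqrt (α ^ 2 + Real.sin y ^ 2)) - 1) /
          ((α ^ 2 / 2) * Real.log (1 / α)))
      (𝓝[>] (0:ℝ)) (𝓝 1) := by
  have hπ := Real.pi_pos
  have key : Tendsto (fun α : ℝ =>
      (∫ y in (0:ℝ)..(π / 2), gg α y) / ((1/2 : ℝ) * Real.log (1/α)))
      (𝓝[>] (0:ℝ)) (𝓝 1) := by
    rw [Metric.tendsto_nhds]
    intro ε hε
    have hcos : Tendsto (fun δ : ℝ => 1 / Real.cos δ) (𝓝[>] (0:ℝ)) (𝓝 1) := by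
      have hc : ContinuousAt (fun δ : ℝ => 1 / Real.cos δ) 0 := by
        apply ContinuousAt.div continuousAt_const Real.continuous_cos.continuousAt
        simp
      have h := hc.tendsto.mono_left (nhdsWithin_le_nhds (s := Ioi (0:ℝ)))
      simpa using h
    have hδex : ∃ δ : ℝ, δ ∈ Ioo (0:ℝ) 1 ∧ 1 / Real.cos δ < 1 + ε/2 := by
      have h1 : ∀ᶠ δ in 𝓝[>] (0:ℝ), 1 / Real.cos δ < 1 + ε/2 :=
        hcos.eventually_lt_const (by linarith)
      have h2 : ∀ᶠ δ in 𝓝[>] (0:ℝ), δ ∈ Ioo (0:ℝ) 1 := Ioo_mem_nhdsGT one_pos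
      rcases (h2.and h1).exists with ⟨δ, hδ1, hδ2⟩
      exact ⟨δ, hδ1, hδ2⟩
    obtain ⟨δ, hδmem, hδcos⟩ := hδex
    have hev2 : ∀ᶠ α in 𝓝[>] (0:ℝ),
        (1 + π / (4 * Real.sin δ) + (1 / (2 * Real.cos δ)) * (Real.log δ - Real.log α))
          / ((1/2 : ℝ) * Real.log (1/α)) < 1 + ε :=
      (up_tendsto hδmem.1).eventually_lt_const (by linarith)
    have hev1 : ∀ᶠ α in 𝓝[>] (0:ℝ), 1 - ε <
        ((1/2 : ℝ) * (Real.log (α + π) - Real.log α)) / ((1/2 : ℝ) * Real.log (1/α)) :=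
      lo_tendsto.eventually_const_lt (by linarith)
    filter_upwards [hev1, hev2, Ioo_mem_nhdsGT hδmem.1] with α h1 h2 h3
    have hα : 0 < α := h3.1
    have hα1 : α < 1 := lt_trans h3.2 hδmem.2
    have hLpos : 0 < (1/2 : ℝ) * Real.log (1/α) := by
      have h11 : (1:ℝ) < 1/α := by rw [lt_div_iff₀ hα]; linarith
      have := Real.log_pos h11
      linarith
    have hQlo : ((1/2 : ℝ) * (Real.log (α + π) - Real.log α)) / ((1/2:ℝ) * Real.log (1/α))
        ≤ (∫ y in (0:ℝ)..(π / 2), gg α y) / ((1/2:ℝ) * Real.log (1/α)) := by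
      gcongr
      exact lower_bd hα
    have hQup : (∫ y in (0:ℝ)..(π / 2), gg α y) / ((1/2:ℝ) * Real.log (1/α))
        ≤ (1 + π / (4 * Real.sin δ) + (1 / (2 * Real.cos δ)) * (Real.log δ - Real.log α))
          / ((1/2 : ℝ) * Real.log (1/α)) := by
      gcongr
      exact upper_bd hα h3.2.le hδmem.2.le
    rw [Real.dist_eq, abs_lt]
    constructor <;> linarith
  apply key.congr'
  filter_upwards [Ioo_mem_nhdsGT one_pos] with α hα
  have hα0 : 0 < α := hα.1
  rw [ident hα0, show (α^2/2) * Real.log (1/α) = α^2 * ((1/2 : ℝ)*Real.log (1/α)) by ring,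
    mul_div_mul_left _ _ (by positivity : (α:ℝ)^2 ≠ 0)]
end
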